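/- arXiv:2510.12450 — 11 statements merged into one kernel-verified Lean document; each statement's English description precedes it below -/
import Mathlib

section
/- Let F : ℝ → ℝ be a function whose graph G = {(x, F x) | x ∈ ℝ} intersects every closed subset A of ℝ² whose projection onto the first coordinate contains a nondegenerate interval. Then G is a connected subspace of ℝ². -/
open Set Metric

/-- Separated nonempty sets in a metric space lie in disjoint open sets. -/
lemma aux_sep {X : Type*} [MetricSpace X] (A B : Set X) (hB : B.Nonempty) (hA : A.Nonempty)
    (h1 : Disjoint (closure A) B) (h2 : Disjoint A (closure B)) :
    ∃ U V : Set X, IsOpen U ∧ IsOpen V ∧ A ⊆ U ∧ B ⊆ V ∧ Disjoint U V := by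
  refine ⟨{p | infDist p A < infDist p B}, {p | infDist p B < infDist p A}, ?_, ?_, ?_, ?_, ?_⟩
  · exact isOpen_lt (continuous_infDist_pt A) (continuous_infDist_pt B)
  · exact isOpen_lt (continuous_infDist_pt B) (continuous_infDist_pt A)
  · intro p hp
    have e0 : infDist p A = 0 := infDist_zero_of_mem hp
    have hpB : p ∉ closure B := fun hc => h2.ne_of_mem hp hc rfl
    have : infDist p B ≠ 0 := fun hc => hpB ((mem_closure_iff_infDist_zero hB).2 hc)
    have : 0 < infDist p B := lt_of_le_of_ne infDist_nonneg (Ne.symm this)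
    simpa [e0] using this
  · intro p hp
    have e0 : infDist p B = 0 := infDist_zero_of_mem hp
    have hpA : p ∉ closure A := fun hc => h1.ne_of_mem hc hp rfl
    have : infDist p A ≠ 0 := fun hc => hpA ((mem_closure_iff_infDist_zero hA).2 hc)
    have : 0 < infDist p A := lt_of_le_of_ne infDist_nonneg (Ne.symm this)
    simpa [e0] using this
  · rw [Set.disjoint_left]
    intro p hp hp'
    simp only [Set.mem_setOf_eq] at hp hp'
    linarith

lemma aux_key (F : ℝ → ℝ)
    (h : ∀ A : Set (ℝ × ℝ), IsClosed A →
      (∃ u v : ℝ, u < v ∧ Set.Icc u v ⊆ Prod.fst '' A) →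
      (A ∩ {p : ℝ × ℝ | p.2 = F p.1}).Nonempty)
    (U V : Set (ℝ × ℝ)) (hU : IsOpen U) (hV : IsOpen V) (hd : Disjoint U V)
    (hsub : {p : ℝ × ℝ | p.2 = F p.1} ⊆ U ∪ V)
    (a b : ℝ) (ha : (a, F a) ∈ U) (hb : (b, F b) ∈ V) (hab : a < b) : False := by
  set G : Set (ℝ × ℝ) := {p | p.2 = F p.1} with hGdef
  set A : Set (ℝ × ℝ) := frontier U ∪ frontier V with hAdef
  have hUclV : Disjoint U (closure V) := hd.closure_right hU
  have hVclU : Disjoint V (closure U) := hd.symm.closure_right hV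
  have hAclosed : IsClosed A := isClosed_frontier.union isClosed_frontier
  have hAG : ∀ p ∈ G, p ∉ A := by
    intro p hp hpA
    rcases hsub hp with hpU | hpV
    · rcases hpA with h1 | h1
      · exact (hU.frontier_eq ▸ h1).2 hpU
      · exact hUclV.ne_of_mem hpU (frontier_subset_closure h1) rfl
    · rcases hpA with h1 | h1
      · exact hVclU.ne_of_mem hpV (frontier_subset_closure h1) rfl
      · exact (hV.frontier_eq ▸ h1).2 hpV
  -- projection of A contains no nondegenerate interval
  have hproj : ∀ u v : ℝ, u < v → ∃ x ∈ Set.Icc u v, x ∉ Prod.fst '' A := by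
    intro u v huv
    by_contra hc
    push_neg at hc
    obtain ⟨p, hpA, hpG⟩ := h A hAclosed ⟨u, v, huv, fun x hx => hc x hx⟩
    exact hAG p hpG hpA
  -- S_U and S_V : vertical lines entirely inside U resp. V
  set SU : Set ℝ := {x | ∀ y : ℝ, (x, y) ∈ U} with hSU
  set SV : Set ℝ := {x | ∀ y : ℝ, (x, y) ∈ V} with hSV
  have key1 : ∀ x : ℝ, x ∉ Prod.fst '' A → x ∈ SU ∨ x ∈ SV := by
    intro x hx
    have hline : ∀ y : ℝ, (x, y) ∉ A := by
      intro y hy; exact hx ⟨(x, y), hy, rfl⟩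
    set L : Set (ℝ × ℝ) := (fun y : ℝ => (x, y)) '' Set.univ with hL
    have hLpre : IsPreconnected L :=
      isPreconnected_univ.image _ (Continuous.prodMk_right x).continuousOn
    have hmem : ∀ y : ℝ, (x, y) ∈ L := fun y => ⟨y, trivial, rfl⟩
    have hgx : (x, F x) ∈ U ∪ V := hsub rfl
    have sub_of : ∀ W : Set (ℝ × ℝ), IsOpen W → ((x, F x) ∈ W) →
        (∀ y : ℝ, (x, y) ∉ frontier W) → ∀ y : ℝ, (x, y) ∈ W := by
      intro W hW hxW hfr
      have hLsub : L ⊆ W ∪ (closure W)ᶜ := by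
        rintro p ⟨y, -, rfl⟩
        by_cases hpW : (x, y) ∈ W
        · exact Or.inl hpW
        · refine Or.inr fun hcl => hfr y ?_
          rw [hW.frontier_eq]; exact ⟨hcl, hpW⟩
      have hdisj : Disjoint W (closure W)ᶜ :=
        Set.disjoint_left.2 fun p hp hp' => hp' (subset_closure hp)
      have := IsPreconnected.subset_left_of_subset_union hW
        (isClosed_closure.isOpen_compl) hdisj hLsub ⟨(x, F x), hmem _, hxW⟩ hLpre
      intro y; exact this (hmem y)
    rcases hgx with hgU | hgV
    · exact Or.inl (sub_of U hU hgU (fun y hy => hline y (Or.inl hy)))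
    · exact Or.inr (sub_of V hV hgV (fun y hy => hline y (Or.inr hy)))
  have key2 : ∀ u v : ℝ, u < v → ∃ x ∈ Set.Icc u v, x ∈ SU ∨ x ∈ SV := by
    intro u v huv
    obtain ⟨x, hx1, hx2⟩ := hproj u v huv
    exact ⟨x, hx1, key1 x hx2⟩
  have key3 : ∀ (W : Set (ℝ × ℝ)) (S : Set ℝ), (∀ x ∈ S, ∀ y : ℝ, (x, y) ∈ W) →
      ∀ y x, x ∈ closure S → (x, y) ∈ closure W := by
    intro W S hSW y x hx
    have : S ⊆ (fun t : ℝ => (t, y)) ⁻¹' closure W := by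
      intro t ht; exact subset_closure (hSW t ht y)
    have hcl : closure S ⊆ (fun t : ℝ => (t, y)) ⁻¹' closure W :=
      closure_minimal this (isClosed_closure.preimage (by fun_prop))
    exact hcl hx
  -- the sup argument
  set T : Set ℝ := (SU ∩ Set.Icc a b) ∪ {a} with hT
  have hTne : T.Nonempty := ⟨a, Or.inr rfl⟩
  have hTbdd : BddAbove T := by
    refine ⟨b, ?_⟩
    rintro x (⟨-, -, hx2⟩ | rfl)
    · exact hx2
    · exact hab.le
  set c : ℝ := sSup T with hc
  have hac : a ≤ c := le_csSup hTbdd (Or.inr rfl)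
  have hcb : c ≤ b := csSup_le hTne (by rintro x (⟨-, -, hx2⟩ | rfl); exacts [hx2, hab.le])
  have hcclT : c ∈ closure T := (Real.isLUB_sSup hTne hTbdd).mem_closure hTne
  have hcl_cases : c ∈ closure SU ∨ c = a := by
    have : closure T ⊆ closure (SU ∩ Set.Icc a b) ∪ {a} := by
      rw [hT, closure_union, closure_singleton]
    rcases this hcclT with h1 | h1
    · exact Or.inl (closure_mono Set.inter_subset_left h1)
    · exact Or.inr h1
  have hcU : (c, F c) ∈ closure U := by
    rcases hcl_cases with h1 | h1
    · exact key3 U SU (fun x hx => hx) (F c) c h1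
    · rw [h1]; exact subset_closure ha
  have hcb' : c < b := by
    rcases lt_or_eq_of_le hcb with h1 | h1
    · exact h1
    · exfalso
      rcases hcl_cases with h2 | h2
      · have : (b, F b) ∈ closure U := by rw [← h1]; exact hcU
        exact hVclU.ne_of_mem hb this rfl
      · exact hab.ne (h2.symm.trans h1)
  have hcSV : c ∈ closure SV := by
    rw [Metric.mem_closure_iff]
    intro ε hε
    set δ : ℝ := min ε (b - c) with hδ
    have hδpos : 0 < δ := lt_min hε (by linarith)
    have hlt : c + δ / 3 < c + 2 * δ / 3 := by linarith
    obtain ⟨x, hx1, hx2⟩ := key2 (c + δ / 3) (c + 2 * δ / 3) hlt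
    have hxgtc : c < x := lt_of_lt_of_le (by linarith) hx1.1
    have hxleb : x ≤ b := by
      have : δ ≤ b - c := min_le_right _ _
      have := hx1.2; linarith
    rcases hx2 with hxU | hxV
    · exfalso
      have : x ∈ T := Or.inl ⟨hxU, le_trans hac hxgtc.le, hxleb⟩
      exact absurd (le_csSup hTbdd this) (not_le.2 hxgtc)
    · refine ⟨x, hxV, ?_⟩
      rw [Real.dist_eq, abs_lt]
      have h1 : x ≤ c + 2 * δ / 3 := hx1.2
      have h2 : δ ≤ ε := min_le_left _ _
      constructor <;> [linarith; linarith]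
  have hcV : (c, F c) ∈ closure V := key3 V SV (fun x hx => hx) (F c) c hcSV
  have hgc : (c, F c) ∈ U ∪ V := hsub rfl
  rcases hgc with h1 | h1
  · exact hUclV.ne_of_mem h1 hcV rfl
  · exact hVclU.ne_of_mem h1 hcU rfl

theorem stmt_1 (F : ℝ → ℝ)
    (h : ∀ A : Set (ℝ × ℝ), IsClosed A →
      (∃ u v : ℝ, u < v ∧ Set.Icc u v ⊆ Prod.fst '' A) →
      (A ∩ {p : ℝ × ℝ | p.2 = F p.1}).Nonempty) :
    IsConnected {p : ℝ × ℝ | p.2 = F p.1} := by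
  set G : Set (ℝ × ℝ) := {p | p.2 = F p.1} with hGdef
  refine ⟨⟨(0, F 0), rfl⟩, ?_⟩
  by_contra hnc
  rw [IsPreconnected] at hnc
  push_neg at hnc
  obtain ⟨u, v, hu, hv, hGuv, ⟨p, hpG, hpu⟩, ⟨q, hqG, hqv⟩, hsep⟩ := hnc
  have hsep' : G ∩ (u ∩ v) = ∅ := hsep
  -- the two pieces are separated
  set Au : Set (ℝ × ℝ) := G ∩ u with hAu
  set Av : Set (ℝ × ℝ) := G ∩ v with hAv
  have h1 : Disjoint (closure Au) Av := by
    rw [Set.disjoint_left]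
    rintro r hr ⟨hrG, hrv⟩
    rcases mem_closure_iff.1 hr v hv hrv with ⟨s, hsv, hsG, hsu⟩
    have : s ∈ G ∩ (u ∩ v) := ⟨hsG, hsu, hsv⟩
    rw [hsep'] at this; exact this
  have h2 : Disjoint Au (closure Av) := by
    rw [Set.disjoint_left]
    rintro r ⟨hrG, hru⟩ hr
    rcases mem_closure_iff.1 hr u hu hru with ⟨s, hsu, hsG, hsv⟩
    have : s ∈ G ∩ (u ∩ v) := ⟨hsG, hsu, hsv⟩
    rw [hsep'] at this; exact this
  obtain ⟨U, V, hUo, hVo, hAuU, hAvV, hUV⟩ :=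
    aux_sep Au Av ⟨q, hqG, hqv⟩ ⟨p, hpG, hpu⟩ h1 h2
  have hGsub : G ⊆ U ∪ V := by
    intro r hr
    rcases hGuv hr with h3 | h3
    · exact Or.inl (hAuU ⟨hr, h3⟩)
    · exact Or.inr (hAvV ⟨hr, h3⟩)
  have hpU : (p.1, F p.1) ∈ U := by
    have : p = (p.1, F p.1) := by
      have := hpG; rw [hGdef] at this; exact Prod.ext rfl this
    rw [← this]; exact hAuU ⟨hpG, hpu⟩
  have hqV : (q.1, F q.1) ∈ V := by
    have : q = (q.1, F q.1) := by
      have := hqG; rw [hGdef] at this; exact Prod.ext rfl this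
    rw [← this]; exact hAvV ⟨hqG, hqv⟩
  rcases lt_trichotomy p.1 q.1 with hlt | heq | hgt
  · exact aux_key F h U V hUo hVo hUV hGsub p.1 q.1 hpU hqV hlt
  · rw [heq] at hpU
    exact hUV.ne_of_mem hpU hqV rfl
  · exact aux_key F h V U hVo hUo hUV.symm (fun r hr => (hGsub hr).symm)
      q.1 p.1 hqV hpU hgt
end

section
/- If F : ℝ → ℝ is a function whose graph is a connected and Gδ subset of ℝ², then the set S of points x ∈ ℝ at which F is discontinuous is meager in ℝ. -/
open Set Metric

section Stmt3Aux

variable {F : ℝ → ℝ}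

private lemma stmt3_ivp_lt (hconn : IsPreconnected {p : ℝ × ℝ | p.2 = F p.1})
    {a b c : ℝ} (hab : a < b) (h1 : F a < c) (h2 : c < F b) :
    ∃ t ∈ Set.Icc a b, F t = c := by
  by_contra hno
  push_neg at hno
  have hUo : IsOpen ({p : ℝ × ℝ | p.1 < a} ∪ {p : ℝ × ℝ | p.1 < b ∧ p.2 < c}) :=
    (isOpen_lt continuous_fst continuous_const).union
      ((isOpen_lt continuous_fst continuous_const).inter
        (isOpen_lt continuous_snd continuous_const))
  have hVo : IsOpen ({p : ℝ × ℝ | c < p.2 ∧ a < p.1} ∪ {p : ℝ × ℝ | b < p.1}) :=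
    ((isOpen_lt continuous_const continuous_snd).inter
      (isOpen_lt continuous_const continuous_fst)).union
      (isOpen_lt continuous_const continuous_fst)
  have hcover : {p : ℝ × ℝ | p.2 = F p.1} ⊆
      ({p : ℝ × ℝ | p.1 < a} ∪ {p : ℝ × ℝ | p.1 < b ∧ p.2 < c}) ∪
      ({p : ℝ × ℝ | c < p.2 ∧ a < p.1} ∪ {p : ℝ × ℝ | b < p.1}) := by
    rintro ⟨x, y⟩ hxy
    simp only [mem_setOf_eq] at hxy
    subst hxy
    simp only [mem_union, mem_setOf_eq]
    rcases lt_trichotomy x a with h | h | h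
    · exact Or.inl (Or.inl h)
    · subst h
      exact Or.inl (Or.inr ⟨hab, h1⟩)
    · rcases lt_trichotomy x b with h' | h' | h'
      · rcases lt_or_gt_of_ne (hno x ⟨h.le, h'.le⟩) with hc | hc
        · exact Or.inl (Or.inr ⟨h', hc⟩)
        · exact Or.inr (Or.inl ⟨hc, h⟩)
      · subst h'
        exact Or.inr (Or.inl ⟨h2, h⟩)
      · exact Or.inr (Or.inr h')
  obtain ⟨p, hpG, hpU, hpV⟩ := hconn _ _ hUo hVo hcover
    ⟨(a, F a), rfl, Or.inr ⟨hab, h1⟩⟩ ⟨(b, F b), rfl, Or.inl ⟨h2, hab⟩⟩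
  rcases hpU with h | ⟨h, h'⟩ <;> rcases hpV with ⟨g, g'⟩ | g <;>
    simp only [mem_setOf_eq] at * <;> linarith

private lemma stmt3_ivp (hconn : IsPreconnected {p : ℝ × ℝ | p.2 = F p.1})
    (a b c : ℝ) (h1 : F a < c) (h2 : c < F b) :
    ∃ t ∈ Set.uIcc a b, F t = c := by
  rcases lt_trichotomy a b with h | h | h
  · obtain ⟨t, ht, htc⟩ := stmt3_ivp_lt hconn h h1 h2
    exact ⟨t, by rwa [Set.uIcc_of_le h.le], htc⟩
  · subst h; linarith
  · have hconn' : IsPreconnected {p : ℝ × ℝ | p.2 = (fun x => -F x) p.1} := by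
      have heq : {p : ℝ × ℝ | p.2 = (fun x => -F x) p.1} =
          (fun p : ℝ × ℝ => (p.1, -p.2)) '' {p : ℝ × ℝ | p.2 = F p.1} := by
        ext ⟨x, y⟩
        simp only [mem_setOf_eq, mem_image, Prod.exists, Prod.mk.injEq]
        constructor
        · intro hy
          exact ⟨x, F x, rfl, rfl, by simp [hy]⟩
        · rintro ⟨x', y', hy', rfl, rfl⟩
          simp [hy']
      rw [heq]
      exact hconn.image _ (continuous_fst.prodMk continuous_snd.neg).continuousOn
    obtain ⟨t, ht, htc⟩ := stmt3_ivp_lt (F := fun x => -F x) hconn' h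
      (neg_lt_neg h2) (neg_lt_neg h1)
    refine ⟨t, by rwa [Set.uIcc_of_ge h.le], neg_inj.1 (by simpa using htc)⟩

private lemma stmt3_meets {B S : Set ℝ} (hB : IsOpen B) (hsub : B ⊆ closure S)
    (hne : B.Nonempty) : (B ∩ S).Nonempty := by
  obtain ⟨x, hx⟩ := hne
  exact mem_closure_iff.1 (hsub hx) B hB hx

private lemma stmt3_not_meagre_open {O : Set ℝ} (hO : IsOpen O) (hne : O.Nonempty) :
    ¬ IsMeagre O := by
  intro h
  have hd : Dense Oᶜ := dense_of_mem_residual h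
  obtain ⟨x, hx⟩ := hne
  have : Oᶜ = univ := hO.isClosed_compl.closure_eq ▸ hd.closure_eq
  exact (this ▸ (mem_univ x : x ∈ univ) : x ∈ Oᶜ) hx

private lemma stmt3_nwd_meagre {s : Set ℝ} (h : IsNowhereDense s) : IsMeagre s :=
  isMeagre_iff_countable_union_isNowhereDense.2
    ⟨{s}, by simpa using h, countable_singleton s, by simp⟩

private lemma stmt3_cover {A : ℕ → Set ℝ} {O : Set ℝ} (hO : IsOpen O) (hne : O.Nonempty)
    (hcov : O ⊆ ⋃ n, A n) : ∃ n, (interior (closure (A n))).Nonempty := by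
  by_contra h
  push_neg at h
  have hm : IsMeagre (⋃ n, A n) := isMeagre_iUnion fun n =>
    stmt3_nwd_meagre (h n)
  exact stmt3_not_meagre_open hO hne (hm.mono hcov)

private lemma stmt3_key (hGδ : IsGδ {p : ℝ × ℝ | p.2 = F p.1}) {O : Set ℝ}
    (hO : IsOpen O) (hne : O.Nonempty) {v w : ℝ} (hvw : v ≠ w)
    (hv : O ⊆ closure (F ⁻¹' {v})) (hw : O ⊆ closure (F ⁻¹' {w})) : False := by
  obtain ⟨f, fopen, hfG⟩ := hGδ.eq_iInter_nat
  have main : ∀ u : ℝ, O ⊆ closure (F ⁻¹' {u}) →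
      ∀ x ∈ O, (x ∈ ⋂ m, ((fun t : ℝ => (t, u)) ⁻¹' f m ∪ (closure O)ᶜ)) → F x = u := by
    intro u _ x hxO hx
    have hxmem : (x, u) ∈ {p : ℝ × ℝ | p.2 = F p.1} := by
      rw [hfG, mem_iInter]
      intro m
      rcases mem_iInter.1 hx m with h | h
      · exact h
      · exact absurd (subset_closure hxO) h
    exact hxmem.symm
  have dense_aux : ∀ u : ℝ, O ⊆ closure (F ⁻¹' {u}) →
      Dense (⋂ m, ((fun t : ℝ => (t, u)) ⁻¹' f m ∪ (closure O)ᶜ)) := by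
    intro u hu
    apply dense_iInter_of_isOpen
    · intro m
      exact ((fopen m).preimage (continuous_id.prodMk continuous_const)).union
        isClosed_closure.isOpen_compl
    · intro m
      rw [dense_iff_inter_open]
      intro B hB hBne
      by_cases hc : (B ∩ (closure O)ᶜ).Nonempty
      · obtain ⟨y, hy1, hy2⟩ := hc
        exact ⟨y, hy1, Or.inr hy2⟩
      · have hBsub : B ⊆ closure O := by
          intro y hy
          by_contra hyc
          exact hc ⟨y, hy, hyc⟩
        obtain ⟨y, hyB, hyO⟩ := stmt3_meets hB hBsub hBne
        obtain ⟨z, ⟨hz1, hz2⟩, hz3⟩ := stmt3_meets (hB.inter hO)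
          ((inter_subset_right).trans hu) ⟨y, hyB, hyO⟩
        have : (z, u) ∈ f m := by
          have : (z, u) ∈ {p : ℝ × ℝ | p.2 = F p.1} := by
            simpa using (mem_singleton_iff.1 hz3).symm
          rw [hfG] at this
          exact mem_iInter.1 this m
        exact ⟨z, hz1, Or.inl this⟩
  have hGδv : IsGδ (⋂ m, ((fun t : ℝ => (t, v)) ⁻¹' f m ∪ (closure O)ᶜ)) :=
    .iInter_of_isOpen fun m =>
      ((fopen m).preimage (continuous_id.prodMk continuous_const)).union
        isClosed_closure.isOpen_compl
  have hGδw : IsGδ (⋂ m, ((fun t : ℝ => (t, w)) ⁻¹' f m ∪ (closure O)ᶜ)) :=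
    .iInter_of_isOpen fun m =>
      ((fopen m).preimage (continuous_id.prodMk continuous_const)).union
        isClosed_closure.isOpen_compl
  have hdvw := Dense.inter_of_Gδ hGδv hGδw (dense_aux v hv) (dense_aux w hw)
  obtain ⟨x, hxO, hxv, hxw⟩ := dense_iff_inter_open.1 hdvw O hO hne
  exact hvw ((main v hv x hxO hxv).symm.trans (main w hw x hxO hxw))

private lemma stmt3_dense_level (hconn : IsPreconnected {p : ℝ × ℝ | p.2 = F p.1})
    {O₂ A : Set ℝ} (hO₂ : IsOpen O₂) (hA₂ : O₂ ⊆ closure A) {q h v w : ℝ}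
    (hAval : ∀ x ∈ A, F x ∈ Set.Icc q (q + h))
    (hv : O₂ ⊆ closure (F ⁻¹' {v}))
    (hsep : ∀ s ∈ Set.Icc q (q + h), (s < w ∧ w < v) ∨ (v < w ∧ w < s)) :
    O₂ ⊆ closure (F ⁻¹' {w}) := by
  intro x hx
  rw [_root_.mem_closure_iff]
  intro B hB hxB
  obtain ⟨s, hs, hball⟩ := Metric.isOpen_iff.1 (hB.inter hO₂) x ⟨hxB, hx⟩
  have hNv : ball x s ⊆ closure (F ⁻¹' {v}) := fun y hy => hv (hball hy).2
  have hNA : ball x s ⊆ closure A := fun y hy => hA₂ (hball hy).2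
  obtain ⟨x0, hx0N, hx0A⟩ := stmt3_meets isOpen_ball hNA ⟨x, mem_ball_self hs⟩
  obtain ⟨x1, hx1N, hx1v⟩ := stmt3_meets isOpen_ball hNv ⟨x, mem_ball_self hs⟩
  have hx1 : F x1 = v := hx1v
  have hOC : OrdConnected (ball x s) := (convex_ball x s).ordConnected
  rcases hsep (F x0) (hAval x0 hx0A) with ⟨hl, hr⟩ | ⟨hl, hr⟩
  · obtain ⟨t, ht, htw⟩ := stmt3_ivp hconn x0 x1 w hl (by rw [hx1]; exact hr)
    exact ⟨t, (hball (hOC.uIcc_subset hx0N hx1N ht)).1, htw⟩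
  · obtain ⟨t, ht, htw⟩ := stmt3_ivp hconn x1 x0 w (by rw [hx1]; exact hl) hr
    exact ⟨t, (hball (hOC.uIcc_subset hx1N hx0N ht)).1, htw⟩

private lemma stmt3_osc_nwd (hconn : IsPreconnected {p : ℝ × ℝ | p.2 = F p.1})
    (hGδ : IsGδ {p : ℝ × ℝ | p.2 = F p.1}) {ε : ℝ} (hε : 0 < ε) :
    IsNowhereDense {x : ℝ | ∀ δ > 0, ∃ y z : ℝ, |y - x| < δ ∧ |z - x| < δ ∧ ε ≤ F y - F z} := by
  set C := {x : ℝ | ∀ δ > 0, ∃ y z : ℝ, |y - x| < δ ∧ |z - x| < δ ∧ ε ≤ F y - F z} with hCdef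
  rw [IsNowhereDense, ← not_nonempty_iff_eq_empty]
  rintro ⟨x₀, hx₀⟩
  set O := interior (closure C) with hOdef
  have hO : IsOpen O := isOpen_interior
  have hOsub : O ⊆ closure C := interior_subset
  have h4 : (0:ℝ) < ε/4 := by linarith
  -- Step A : find a subinterval where some level band is dense
  set A : ℤ → Set ℝ := fun k => {x | x ∈ O ∧ F x ∈ Set.Icc ((k:ℝ) * (ε/4)) ((k:ℝ) * (ε/4) + ε/4)}
    with hAdef
  have hcov : O ⊆ ⋃ n : ℕ, A ((Denumerable.eqv ℤ).symm n) := by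
    intro x hx
    rw [Function.Surjective.iUnion_comp (Denumerable.eqv ℤ).symm.surjective]
    refine mem_iUnion.2 ⟨⌊F x / (ε/4)⌋, hx, ?_, ?_⟩
    · exact (le_div_iff₀ h4).1 (Int.floor_le _)
    · have := (div_lt_iff₀ h4).1 (Int.lt_floor_add_one (F x / (ε/4)))
      push_cast at this
      linarith
  obtain ⟨n, hn⟩ := stmt3_cover hO ⟨x₀, hx₀⟩ hcov
  set k : ℤ := (Denumerable.eqv ℤ).symm n with hkdef
  set q : ℝ := (k:ℝ) * (ε/4) with hqdef
  set O₁ := interior (closure (A k)) with hO₁def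
  have hO₁ : IsOpen O₁ := isOpen_interior
  have hne₁ : O₁.Nonempty := hn
  have hsubA : O₁ ⊆ closure (A k) := interior_subset
  have hAO : A k ⊆ O := fun x hx => hx.1
  have hAval : ∀ x ∈ A k, F x ∈ Set.Icc q (q + ε/4) := fun x hx => hx.2
  have hsubC : O₁ ⊆ closure C := by
    refine hsubA.trans ((closure_mono hAO).trans ?_)
    have := closure_mono hOsub
    rwa [closure_closure] at this
  -- Step B : the two levels l, u together are dense in O₁
  set l : ℝ := q - ε/8 with hldef
  set u : ℝ := q + 3*ε/8 with hudef
  have hB : O₁ ⊆ closure (F ⁻¹' {l}) ∪ closure (F ⁻¹' {u}) := by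
    rw [← closure_union]
    intro x hx
    rw [_root_.mem_closure_iff]
    intro B hBo hxB
    obtain ⟨s, hs, hball⟩ := Metric.isOpen_iff.1 (hBo.inter hO₁) x ⟨hxB, hx⟩
    have hNC : ball x s ⊆ closure C := fun y hy => hsubC (hball hy).2
    have hNA : ball x s ⊆ closure (A k) := fun y hy => hsubA (hball hy).2
    obtain ⟨p, hpN, hpC⟩ := stmt3_meets isOpen_ball hNC ⟨x, mem_ball_self hs⟩
    obtain ⟨δ, hδ, hballδ⟩ := Metric.isOpen_iff.1 isOpen_ball p hpN
    obtain ⟨y, z, hy, hz, hyz⟩ := hpC δ hδ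
    have hyN : y ∈ ball x s := hballδ (by rwa [mem_ball, Real.dist_eq])
    have hzN : z ∈ ball x s := hballδ (by rwa [mem_ball, Real.dist_eq])
    obtain ⟨x0, hx0N, hx0A⟩ := stmt3_meets isOpen_ball hNA ⟨x, mem_ball_self hs⟩
    have hx0v := hAval x0 hx0A
    have hOC : OrdConnected (ball x s) := (convex_ball x s).ordConnected
    rcases lt_or_ge (F y) u with hyu | hyu
    · have hzl : F z < l := by rw [hldef]; rw [hudef] at hyu; linarith
      obtain ⟨t, ht, htw⟩ := stmt3_ivp hconn z x0 l hzl
        (by rw [hldef]; linarith [hx0v.1])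
      exact ⟨t, (hball (hOC.uIcc_subset hzN hx0N ht)).1, Or.inl htw⟩
    · rcases eq_or_lt_of_le hyu with heq | hlt
      · exact ⟨y, (hball hyN).1, Or.inr heq.symm⟩
      · obtain ⟨t, ht, htw⟩ := stmt3_ivp hconn x0 y u
          (by rw [hudef]; linarith [hx0v.2]) hlt
        exact ⟨t, (hball (hOC.uIcc_subset hx0N hyN ht)).1, Or.inr htw⟩
  -- Step C : one of the two levels is dense in a smaller open set
  by_cases hcase : (O₁ \ closure (F ⁻¹' {l})).Nonempty
  · set O₂ := O₁ \ closure (F ⁻¹' {l}) with hO₂def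
    have hO₂ : IsOpen O₂ := hO₁.sdiff isClosed_closure
    have hA₂ : O₂ ⊆ closure (A k) := diff_subset.trans hsubA
    have hvO₂ : O₂ ⊆ closure (F ⁻¹' {u}) := by
      intro x hx
      rcases hB hx.1 with h | h
      · exact absurd h hx.2
      · exact h
    have hsep : ∀ s ∈ Set.Icc q (q + ε/4),
        (s < q + 5*ε/16 ∧ q + 5*ε/16 < u) ∨ (u < q + 5*ε/16 ∧ q + 5*ε/16 < s) :=
      fun s hs => Or.inl ⟨by linarith [hs.2], by rw [hudef]; linarith⟩
    have hw2 : O₂ ⊆ closure (F ⁻¹' {q + 5*ε/16}) :=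
      stmt3_dense_level hconn hO₂ hA₂ hAval hvO₂ hsep
    exact stmt3_key hGδ hO₂ hcase (by rw [hudef]; intro hcon; linarith) hvO₂ hw2
  · have hvO₂ : O₁ ⊆ closure (F ⁻¹' {l}) := by
      intro x hx
      by_contra hxc
      exact hcase ⟨x, hx, hxc⟩
    have hsep : ∀ s ∈ Set.Icc q (q + ε/4),
        (s < q - ε/16 ∧ q - ε/16 < l) ∨ (l < q - ε/16 ∧ q - ε/16 < s) :=
      fun s hs => Or.inr ⟨by rw [hldef]; linarith, by linarith [hs.1]⟩
    have hw2 : O₁ ⊆ closure (F ⁻¹' {q - ε/16}) :=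
      stmt3_dense_level hconn hO₁ hsubA hAval hvO₂ hsep
    exact stmt3_key hGδ hO₁ hne₁ (by rw [hldef]; intro hcon; linarith) hvO₂ hw2

end Stmt3Aux

theorem stmt_3 (F : ℝ → ℝ)
    (hconn : IsConnected {p : ℝ × ℝ | p.2 = F p.1})
    (hGδ : IsGδ {p : ℝ × ℝ | p.2 = F p.1}) :
    IsMeagre {x : ℝ | ¬ ContinuousAt F x} := by
  have hpre := hconn.isPreconnected
  have hsub : {x : ℝ | ¬ ContinuousAt F x} ⊆
      ⋃ n : ℕ, {x : ℝ | ∀ δ > 0, ∃ y z : ℝ,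
        |y - x| < δ ∧ |z - x| < δ ∧ 1/((n:ℝ)+1) ≤ F y - F z} := by
    intro x hx
    simp only [mem_setOf_eq] at hx
    rw [Metric.continuousAt_iff] at hx
    push_neg at hx
    obtain ⟨ε, hε, hd⟩ := hx
    obtain ⟨n, hn⟩ := exists_nat_one_div_lt hε
    refine mem_iUnion.2 ⟨n, ?_⟩
    intro δ hδ
    obtain ⟨y, hy1, hy2⟩ := hd δ hδ
    rw [Real.dist_eq] at hy1 hy2
    rcases le_abs.1 hy2 with h | h
    · exact ⟨y, x, hy1, by simpa using hδ, by linarith⟩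
    · exact ⟨x, y, by simpa using hδ, hy1, by linarith⟩
  exact (isMeagre_iUnion fun n => stmt3_nwd_meagre
    (stmt3_osc_nwd hpre hGδ (by positivity))).mono hsub
end

section
/- If F : ℝ → ℝ is a function whose graph is a connected subset of ℝ², then for every interval I ⊆ ℝ, the set {(x, F x) | x ∈ I} is a connected subset of ℝ². -/
/-- Key separation lemma: if the full graph of `F` is preconnected, then there is no
open separation of the graph over `[a, b]` putting `(a, F a)` and `(b, F b)` on
different sides. -/
lemma stmt_7_key (F : ℝ → ℝ)
    (hG : IsPreconnected {p : ℝ × ℝ | p.2 = F p.1})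
    (u v : Set (ℝ × ℝ)) (hu : IsOpen u) (hv : IsOpen v)
    (a b : ℝ) (hab : a < b)
    (hsub : ∀ x ∈ Set.Icc a b, (x, F x) ∈ u ∪ v)
    (hdisj : ∀ x ∈ Set.Icc a b, (x, F x) ∉ u ∩ v)
    (ha : (a, F a) ∈ u) (hb : (b, F b) ∈ v) : False := by
  set G : Set (ℝ × ℝ) := {p : ℝ × ℝ | p.2 = F p.1} with hGdef
  set P : Set (ℝ × ℝ) := {p | p.2 = F p.1 ∧ p.1 ∈ Set.Icc a b ∧ p ∈ u} with hP
  set Q : Set (ℝ × ℝ) := {p | p.2 = F p.1 ∧ p.1 ∈ Set.Icc a b ∧ p ∈ v} with hQ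
  set L : Set (ℝ × ℝ) := {p | p.2 = F p.1 ∧ p.1 ≤ a} with hL
  set R : Set (ℝ × ℝ) := {p | p.2 = F p.1 ∧ b ≤ p.1} with hR
  set A : Set (ℝ × ℝ) := P ∪ L with hA
  set B : Set (ℝ × ℝ) := Q ∪ R with hB
  -- closure bounds
  have hstrip : IsClosed {p : ℝ × ℝ | p.1 ∈ Set.Icc a b} :=
    isClosed_Icc.preimage continuous_fst
  have hPstrip : closure P ⊆ {p : ℝ × ℝ | p.1 ∈ Set.Icc a b} :=
    closure_minimal (fun p hp => hp.2.1) hstrip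
  have hQstrip : closure Q ⊆ {p : ℝ × ℝ | p.1 ∈ Set.Icc a b} :=
    closure_minimal (fun p hp => hp.2.1) hstrip
  have hLcl : closure L ⊆ {p : ℝ × ℝ | p.1 ≤ a} :=
    closure_minimal (fun p hp => hp.2) (isClosed_le continuous_fst continuous_const)
  have hRcl : closure R ⊆ {p : ℝ × ℝ | b ≤ p.1} :=
    closure_minimal (fun p hp => hp.2) (isClosed_le continuous_const continuous_fst)
  have hPv : closure P ⊆ vᶜ := by
    apply closure_minimal _ (hv.isClosed_compl)
    rintro p ⟨hpG, hpI, hpu⟩ hpv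
    have : p = (p.1, F p.1) := Prod.ext rfl hpG
    exact hdisj p.1 hpI (by rw [← this]; exact ⟨hpu, hpv⟩)
  have hQu : closure Q ⊆ uᶜ := by
    apply closure_minimal _ (hu.isClosed_compl)
    rintro p ⟨hpG, hpI, hpv⟩ hpu
    have : p = (p.1, F p.1) := Prod.ext rfl hpG
    exact hdisj p.1 hpI (by rw [← this]; exact ⟨hpu, hpv⟩)
  -- B ∩ closure A = ∅
  have hBclA : ∀ p ∈ B, p ∉ closure A := by
    rintro p hpB hpclA
    rw [hA, closure_union] at hpclA
    rcases hpB with ⟨hpG, hpI, hpv⟩ | ⟨hpG, hpb⟩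
    · rcases hpclA with hpP | hpL
      · exact hPv hpP hpv
      · have hple : p.1 ≤ a := hLcl hpL
        have : p.1 = a := le_antisymm hple hpI.1
        have hpae : p = (a, F a) := Prod.ext this (by rw [hpG, this])
        exact hdisj a ⟨le_refl a, hab.le⟩ (hpae ▸ ⟨hpae ▸ ha, hpv⟩)
    · rcases hpclA with hpP | hpL
      · have : p.1 = b := le_antisymm (hPstrip hpP).2 hpb
        have hpbe : p = (b, F b) := Prod.ext this (by rw [hpG, this])
        exact hPv hpP (hpbe ▸ hb)
      · exact absurd (hLcl hpL) (by simp only [Set.mem_setOf_eq]; linarith)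
  -- A ∩ closure B = ∅
  have hAclB : ∀ p ∈ A, p ∉ closure B := by
    rintro p hpA hpclB
    rw [hB, closure_union] at hpclB
    rcases hpA with ⟨hpG, hpI, hpu⟩ | ⟨hpG, hpa⟩
    · rcases hpclB with hpQ | hpR
      · exact hQu hpQ hpu
      · have : p.1 = b := le_antisymm hpI.2 (hRcl hpR)
        have hpbe : p = (b, F b) := Prod.ext this (by rw [hpG, this])
        exact hdisj b ⟨hab.le, le_refl b⟩ (hpbe ▸ ⟨hpu, hpbe ▸ hb⟩)
    · rcases hpclB with hpQ | hpR
      · have : p.1 = a := le_antisymm hpa (hQstrip hpQ).1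
        have hpae : p = (a, F a) := Prod.ext this (by rw [hpG, this])
        exact hQu hpQ (hpae ▸ ha)
      · exact absurd (hRcl hpR) (by simp only [Set.mem_setOf_eq]; linarith)
  -- G ⊆ A ∪ B
  have hcup : G ⊆ A ∪ B := by
    intro p hpG
    rcases le_or_gt p.1 a with h1 | h1
    · exact Or.inl (Or.inr ⟨hpG, h1⟩)
    rcases le_or_gt p.1 b with h2 | h2
    · have hIcc : p.1 ∈ Set.Icc a b := ⟨h1.le, h2⟩
      have hpe : p = (p.1, F p.1) := Prod.ext rfl hpG
      rcases hsub p.1 hIcc with h | h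
      · exact Or.inl (Or.inl ⟨hpG, hIcc, hpe ▸ h⟩)
      · exact Or.inr (Or.inl ⟨hpG, hIcc, hpe ▸ h⟩)
    · exact Or.inr (Or.inr ⟨hpG, h2.le⟩)
  -- apply the closed-sets characterization of preconnectedness to `closure A`, `closure B`
  have := isPreconnected_iff_subset_of_disjoint_closed.mp hG (closure A) (closure B)
    isClosed_closure isClosed_closure
    (fun p hp => (hcup hp).imp (fun h => subset_closure h) (fun h => subset_closure h))
    (by
      ext p
      simp only [Set.mem_inter_iff, Set.mem_empty_iff_false, iff_false, not_and]
      intro hpG hpclA hpclB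
      rcases hcup hpG with hpA | hpB
      · exact hAclB p hpA hpclB
      · exact hBclA p hpB hpclA)
  have haA : (a, F a) ∈ A := Or.inl ⟨rfl, ⟨le_refl a, hab.le⟩, ha⟩
  have hbB : (b, F b) ∈ B := Or.inl ⟨rfl, ⟨hab.le, le_refl b⟩, hb⟩
  rcases this with h | h
  · exact hBclA _ hbB (h (show ((b : ℝ), F b) ∈ G from rfl))
  · exact hAclB _ haA (h (show ((a : ℝ), F a) ∈ G from rfl))

theorem stmt_7 (F : ℝ → ℝ)
    (hconn : IsConnected {p : ℝ × ℝ | p.2 = F p.1}) :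
    ∀ I : Set ℝ, Convex ℝ I →
      IsPreconnected {p : ℝ × ℝ | p.1 ∈ I ∧ p.2 = F p.1} := by
  intro I hI
  have hG : IsPreconnected {p : ℝ × ℝ | p.2 = F p.1} := hconn.isPreconnected
  have hord : I.OrdConnected := hI.ordConnected
  intro u v hu hv hcov ⟨pa, hpaS, hpau⟩ ⟨pb, hpbS, hpbv⟩
  by_contra hne
  rw [Set.not_nonempty_iff_eq_empty] at hne
  have hdisj : ∀ p ∈ {p : ℝ × ℝ | p.1 ∈ I ∧ p.2 = F p.1}, p ∉ u ∩ v := by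
    intro p hp hpuv
    have : p ∈ ({p : ℝ × ℝ | p.1 ∈ I ∧ p.2 = F p.1} ∩ (u ∩ v)) := ⟨hp, hpuv⟩
    rw [hne] at this
    exact this
  obtain ⟨haI, haF⟩ := hpaS
  obtain ⟨hbI, hbF⟩ := hpbS
  have hpae : pa = (pa.1, F pa.1) := Prod.ext rfl haF
  have hpbe : pb = (pb.1, F pb.1) := Prod.ext rfl hbF
  set x := pa.1 with hx
  set y := pb.1 with hy
  have hIcc : ∀ z ∈ Set.Icc x y, z ∈ I := fun z hz => hord.out haI hbI hz
  have hIcc' : ∀ z ∈ Set.Icc y x, z ∈ I := fun z hz => hord.out hbI haI hz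
  have hsub : ∀ z ∈ Set.Icc x y, (z, F z) ∈ u ∪ v :=
    fun z hz => hcov ⟨hIcc z hz, rfl⟩
  have hsub' : ∀ z ∈ Set.Icc y x, (z, F z) ∈ v ∪ u :=
    fun z hz => (hcov ⟨hIcc' z hz, rfl⟩).elim Or.inr Or.inl
  have hd : ∀ z ∈ Set.Icc x y, (z, F z) ∉ u ∩ v :=
    fun z hz => hdisj (z, F z) ⟨hIcc z hz, rfl⟩
  have hd' : ∀ z ∈ Set.Icc y x, (z, F z) ∉ v ∩ u :=
    fun z hz h => hdisj (z, F z) ⟨hIcc' z hz, rfl⟩ ⟨h.2, h.1⟩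
  rcases lt_trichotomy x y with hlt | heq | hgt
  · exact stmt_7_key F hG u v hu hv x y hlt hsub hd (hpae ▸ hpau) (hpbe ▸ hpbv)
  · have : pa = pb := by rw [hpae, hpbe, heq]
    exact hdisj pa ⟨haI, haF⟩ ⟨hpau, this ▸ hpbv⟩
  · exact stmt_7_key F hG v u hv hu y x hgt hsub' hd' (hpbe ▸ hpbv) (hpae ▸ hpau)
end

section
/- If F : ℝ → ℝ is a function whose graph is a Gδ subset of ℝ², then the graph of F is nowhere dense in ℝ². -/
open Set Metric Topology

private lemma isGδ_preimage' {X Y : Type*} [TopologicalSpace X] [TopologicalSpace Y]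
    {f : X → Y} (hf : Continuous f) {s : Set Y} (hs : IsGδ s) : IsGδ (f ⁻¹' s) := by
  obtain ⟨T, hTo, hTc, rfl⟩ := hs
  rw [Set.preimage_sInter]
  exact IsGδ.biInter hTc fun t ht => ((hTo t ht).preimage hf).isGδ

theorem stmt_8 (F : ℝ → ℝ) (hGδ : IsGδ {p : ℝ × ℝ | p.2 = F p.1}) :
    IsNowhereDense {p : ℝ × ℝ | p.2 = F p.1} := by
  set S : Set (ℝ × ℝ) := {p : ℝ × ℝ | p.2 = F p.1} with hS
  show interior (closure S) = ∅
  by_contra h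
  rw [← ne_eq, ← nonempty_iff_ne_empty] at h
  obtain ⟨p, hp⟩ := h
  obtain ⟨r, hr, hball⟩ := Metric.isOpen_iff.1 isOpen_interior p hp
  have hballS : ball p r ⊆ closure S := hball.trans interior_subset
  -- reflection homeomorphism in the second coordinate about p.2
  let e : ℝ × ℝ ≃ₜ ℝ × ℝ :=
    (Homeomorph.refl ℝ).prodCongr ((Homeomorph.neg ℝ).trans (Homeomorph.addLeft (2 * p.2)))
  have he : ∀ q : ℝ × ℝ, e q = (q.1, 2 * p.2 + -q.2) := fun q => rfl
  set T : Set (ℝ × ℝ) := e ⁻¹' S with hT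
  have hTgδ : IsGδ T := isGδ_preimage' e.continuous hGδ
  have hmap : ∀ q : ℝ × ℝ, q ∈ ball p r → e q ∈ ball p r := by
    intro q hq
    simp only [mem_ball, Prod.dist_eq, Real.dist_eq, he] at hq ⊢
    have : |2 * p.2 + -q.2 - p.2| = |q.2 - p.2| := by
      rw [← abs_neg]; ring_nf
    rw [this]; exact hq
  have hballT : ball p r ⊆ closure T := by
    intro q hq
    have : e q ∈ closure S := hballS (hmap q hq)
    rw [hT, ← e.preimage_closure]
    exact this
  -- pass to the subtype of the ball
  set U : Set (ℝ × ℝ) := ball p r with hUdef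
  have hU : IsOpen U := isOpen_ball
  haveI : LocallyCompactSpace U := hU.isLocallyClosed.locallyCompactSpace
  have hpre : ∀ A : Set (ℝ × ℝ), U ⊆ closure A →
      Dense ((Subtype.val : U → ℝ × ℝ) ⁻¹' A) := by
    intro A hA q
    have h1 : q ∈ (Subtype.val : U → ℝ × ℝ) ⁻¹' closure A := hA q.2
    exact hU.isOpenEmbedding_subtypeVal.isOpenMap.preimage_closure_subset_closure_preimage h1
  have hdense : Dense (((Subtype.val : U → ℝ × ℝ) ⁻¹' S) ∩
      ((Subtype.val : U → ℝ × ℝ) ⁻¹' T)) :=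
    Dense.inter_of_Gδ (isGδ_preimage' continuous_subtype_val hGδ)
      (isGδ_preimage' continuous_subtype_val hTgδ) (hpre S hballS) (hpre T hballT)
  -- the intersection lies on the horizontal line y = p.2
  have hline : ∀ q : U, q ∈ ((Subtype.val : U → ℝ × ℝ) ⁻¹' S) ∩
      ((Subtype.val : U → ℝ × ℝ) ⁻¹' T) → (q : ℝ × ℝ).2 = p.2 := by
    rintro q ⟨h1, h2⟩
    have h2' : 2 * p.2 + -(q : ℝ × ℝ).2 = F (q : ℝ × ℝ).1 := h2
    have h1' : (q : ℝ × ℝ).2 = F (q : ℝ × ℝ).1 := h1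
    linarith [h1', h2']
  -- but there is an open subset of U avoiding that line
  have hq0 : ((p.1, p.2 + r / 2) : ℝ × ℝ) ∈ U := by
    rw [hUdef, mem_ball, Prod.dist_eq, max_lt_iff]
    refine ⟨by simpa using hr, ?_⟩
    rw [Real.dist_eq, show p.2 + r / 2 - p.2 = r / 2 by ring, abs_of_pos (by linarith)]
    linarith
  set q0 : U := ⟨(p.1, p.2 + r / 2), hq0⟩
  have hV : IsOpen ((Subtype.val : U → ℝ × ℝ) ⁻¹' (univ ×ˢ Ioi p.2)) :=
    (isOpen_univ.prod isOpen_Ioi).preimage continuous_subtype_val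
  have hq0V : q0 ∈ (Subtype.val : U → ℝ × ℝ) ⁻¹' (univ ×ˢ Ioi p.2) := by
    simp only [mem_preimage, mem_prod, mem_univ, mem_Ioi, true_and]
    show p.2 < p.2 + r / 2
    linarith
  obtain ⟨q, hqV, hqS⟩ := hdense.inter_open_nonempty _ hV ⟨q0, hq0V⟩
  have := hline q hqS
  have : p.2 < p.2 := by
    have h2 := hqV.2
    simp only [mem_Ioi] at h2
    rwa [hline q hqS] at h2
  exact lt_irrefl _ this
end

section
/- If F : ℝ → ℝ is a function whose graph is a connected subset of ℝ², and F is discontinuous at a point a ∈ ℝ, then there exists a nondegenerate closed interval J ⊆ ℝ such that {a} × J is contained in the closure of the graph of F in ℝ². -/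
/-!
A function whose graph is connected has the intermediate value property: if `F` omitted a value
`y` between `F u` and `F v`, the graph would split into the part left of `u` or below `y` before
`v`, and the part right of `v` or above `y` after `u`. If `F` is discontinuous at `a`, then for
some `ε > 0` there are points `x` arbitrarily close to `a` with, say, `F x ≥ F a + ε`. By the
intermediate value property every `y ∈ [F a, F a + ε]` is attained between `a` and such `x`,
hence arbitrarily close to `a`, so `(a, y)` lies in the closure of the graph.
-/

open Set Filter Topology

variable {F : ℝ → ℝ}

theorem isPreconnected_image_Icc_of_isPreconnected_graph
    (hG : IsPreconnected {p : ℝ × ℝ | p.2 = F p.1}) (p q : ℝ) :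
    IsPreconnected (F '' Icc p q) := by
  rintro W W' hW hW' hcover ⟨_, ⟨u, hu, rfl⟩, huW⟩ ⟨_, ⟨v, hv, rfl⟩, hvW'⟩
  wlog huv : u ≤ v generalizing u v W W'
  · obtain ⟨y, hy, hyW', hyW⟩ :=
      this W' W hW' hW (union_comm W W' ▸ hcover) v hv hvW' u hu huW (le_of_not_ge huv)
    exact ⟨y, hy, hyW, hyW'⟩
  by_contra hsep
  have hsep' : ∀ x ∈ Icc u v, F x ∈ W → F x ∉ W' := fun x hx hxW hxW' =>
    hsep ⟨F x, mem_image_of_mem F (Icc_subset_Icc hu.1 hv.2 hx), hxW, hxW'⟩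
  have huv : u < v := huv.lt_of_ne fun h => hsep' u ⟨le_rfl, huv⟩ huW (h ▸ hvW')
  let U : Set (ℝ × ℝ) := {w | w.1 < u} ∪ {w | w.1 < v ∧ w.2 ∈ W}
  let V : Set (ℝ × ℝ) := {w | v < w.1} ∪ {w | u < w.1 ∧ w.2 ∈ W'}
  have hU : IsOpen U := (isOpen_lt continuous_fst continuous_const).union <|
    (isOpen_lt continuous_fst continuous_const).inter (hW.preimage continuous_snd)
  have hV : IsOpen V := (isOpen_lt continuous_const continuous_fst).union <|
    (isOpen_lt continuous_const continuous_fst).inter (hW'.preimage continuous_snd)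
  have hUV : {p : ℝ × ℝ | p.2 = F p.1} ⊆ U ∪ V := by
    rintro ⟨x, t⟩ (rfl : t = F x)
    rcases lt_or_ge x u with hxu | hux
    · exact .inl (.inl hxu)
    rcases lt_or_ge v x with hvx | hxv
    · exact .inr (.inl hvx)
    rcases hcover (mem_image_of_mem F (Icc_subset_Icc hu.1 hv.2 ⟨hux, hxv⟩)) with hxW | hxW'
    · refine .inl (.inr ⟨hxv.lt_of_ne ?_, hxW⟩)
      rintro rfl
      exact hsep' x ⟨hux, le_rfl⟩ hxW hvW'
    · refine .inr (.inr ⟨hux.lt_of_ne' ?_, hxW'⟩)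
      rintro rfl
      exact hsep' x ⟨le_rfl, hxv⟩ huW hxW'
  obtain ⟨⟨x, t⟩, (rfl : t = F x), hxU, hxV⟩ :=
    hG U V hU hV hUV ⟨(u, F u), rfl, .inr ⟨huv, huW⟩⟩ ⟨(v, F v), rfl, .inr ⟨huv, hvW'⟩⟩
  rcases hxU with (hxu : x < u) | ⟨hxv, hxW⟩ <;>
    rcases hxV with (hvx : v < x) | ⟨hux, hxW'⟩
  · linarith
  · linarith
  · linarith
  · exact hsep' x ⟨hux.le, hxv.le⟩ hxW hxW'

theorem exists_mem_uIcc_eq_of_isPreconnected_graph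
    (hG : IsPreconnected {p : ℝ × ℝ | p.2 = F p.1}) {p q y : ℝ} (hy : y ∈ uIcc (F p) (F q)) :
    ∃ z ∈ uIcc p q, F z = y :=
  have himage := isPreconnected_image_Icc_of_isPreconnected_graph hG (min p q) (max p q)
  (isPreconnected_iff_ordConnected.1 himage).uIcc_subset
    (mem_image_of_mem F left_mem_uIcc) (mem_image_of_mem F right_mem_uIcc) hy

theorem mem_closure_graph_of_frequently_mem_uIcc
    (hG : IsPreconnected {p : ℝ × ℝ | p.2 = F p.1}) {a y : ℝ}
    (h : ∃ᶠ x in 𝓝 a, y ∈ uIcc (F a) (F x)) :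
    (a, y) ∈ closure {p : ℝ × ℝ | p.2 = F p.1} := by
  have hy : ∃ᶠ z in 𝓝 a, F z = y := by
    rw [Metric.nhds_basis_ball.frequently_iff] at h ⊢
    intro r hr
    obtain ⟨x, hx, hxy⟩ := h r hr
    obtain ⟨z, hz, rfl⟩ := exists_mem_uIcc_eq_of_isPreconnected_graph hG hxy
    refine ⟨z, ?_, rfl⟩
    rw [Real.ball_eq_Ioo] at hx ⊢
    exact ordConnected_Ioo.uIcc_subset ⟨by linarith, by linarith⟩ hx hz
  rw [mem_closure_iff_frequently]
  exact ((continuous_id.prodMk continuous_const).tendsto a).frequently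
    (hy.mono fun z hz => hz.symm)

theorem stmt_9 (F : ℝ → ℝ)
    (hconn : IsConnected {p : ℝ × ℝ | p.2 = F p.1})
    (a : ℝ) (ha : ¬ ContinuousAt F a) :
    ∃ c d : ℝ, c < d ∧
      ({a} : Set ℝ) ×ˢ Set.Icc c d ⊆ closure {p : ℝ × ℝ | p.2 = F p.1} := by
  obtain ⟨ε, hε, hjump⟩ : ∃ ε > 0, ∃ᶠ x in 𝓝 a, F x ≤ F a - ε ∨ F a + ε ≤ F x := by
    rw [ContinuousAt, Metric.tendsto_nhds] at ha
    push Not at ha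
    obtain ⟨ε, hε, hfreq⟩ := ha
    refine ⟨ε, hε, hfreq.mono fun x hx => ?_⟩
    rw [Real.dist_eq, le_abs'] at hx
    rcases hx with hx | hx
    exacts [.inl (by linarith), .inr (by linarith)]
  rcases frequently_or_distrib.1 hjump with hdown | hup
  · refine ⟨F a - ε, F a, by linarith, ?_⟩
    rintro ⟨_, y⟩ ⟨rfl, hy⟩
    exact mem_closure_graph_of_frequently_mem_uIcc hconn.isPreconnected <|
      hdown.mono fun x hx => mem_uIcc.2 (.inr ⟨by linarith [hy.1], hy.2⟩)
  · refine ⟨F a, F a + ε, by linarith, ?_⟩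
    rintro ⟨_, y⟩ ⟨rfl, hy⟩
    exact mem_closure_graph_of_frequently_mem_uIcc hconn.isPreconnected <|
      hup.mono fun x hx => mem_uIcc.2 (.inl ⟨hy.1, by linarith [hy.2]⟩)
end

section
/- Let 𝒫 be a partition of ℝ into intervals such that the family 𝒜 of singleton members of 𝒫 is uncountable. Then |⋃𝒜| = 2^ℵ₀, i.e. the union of the singleton members of 𝒫 has cardinality continuum. -/
theorem stmt_12 (P : Set (Set ℝ))
    (hconv : ∀ s ∈ P, Convex ℝ s) (hne : ∀ s ∈ P, s.Nonempty)
    (hdisj : ∀ s ∈ P, ∀ t ∈ P, s ≠ t → Disjoint s t)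
    (hcover : ⋃₀ P = Set.univ)
    (huncount : ¬ ({s ∈ P | ∃ a : ℝ, s = {a}}).Countable) :
    Cardinal.mk (⋃₀ {s ∈ P | ∃ a : ℝ, s = {a}} : Set ℝ) = Cardinal.continuum := by
  classical
  set A : Set (Set ℝ) := {s ∈ P | ∃ a : ℝ, s = {a}} with hA
  set Q : Set (Set ℝ) := P \ A with hQ
  -- Q is countable
  have hQc : Q.Countable := by
    apply Set.PairwiseDisjoint.countable_of_nonempty_interior (s := id)
    · intro s hs t ht hst
      exact hdisj s hs.1 t ht.1 hst
    · intro s hs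
      obtain ⟨x, hx⟩ := hne s hs.1
      have : ∃ y ∈ s, y ≠ x := by
        by_contra h
        push_neg at h
        exact hs.2 ⟨hs.1, x, Set.eq_singleton_iff_unique_mem.2 ⟨hx, h⟩⟩
      obtain ⟨y, hy, hyx⟩ := this
      rcases hyx.lt_or_gt with h | h
      · have hsub : Set.Ioo y x ⊆ s := fun z hz =>
          ((hconv s hs.1).ordConnected.out hy hx) ⟨hz.1.le, hz.2.le⟩
        exact ⟨(y + x) / 2, (isOpen_Ioo.subset_interior_iff.2 hsub)
          ⟨by linarith, by linarith⟩⟩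
      · have hsub : Set.Ioo x y ⊆ s := fun z hz =>
          ((hconv s hs.1).ordConnected.out hx hy) ⟨hz.1.le, hz.2.le⟩
        exact ⟨(x + y) / 2, (isOpen_Ioo.subset_interior_iff.2 hsub)
          ⟨by linarith, by linarith⟩⟩
  -- union of singletons is the complement of union of Q
  have hcomp : (⋃₀ A : Set ℝ) = (⋃₀ Q)ᶜ := by
    ext x
    constructor
    · rintro ⟨s, hs, hxs⟩ ⟨t, ht, hxt⟩
      have hst : s ≠ t := fun h => ht.2 (h ▸ hs)
      exact (hdisj s hs.1 t ht.1 hst).le_bot ⟨hxs, hxt⟩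
    · intro hx
      have : x ∈ ⋃₀ P := hcover ▸ Set.mem_univ x
      obtain ⟨s, hs, hxs⟩ := this
      by_cases hsA : s ∈ A
      · exact ⟨s, hsA, hxs⟩
      · exact absurd ⟨s, ⟨hs, hsA⟩, hxs⟩ hx
  have hmeas : MeasurableSet (⋃₀ A : Set ℝ) := by
    rw [hcomp]
    refine (MeasurableSet.sUnion hQc fun s hs => ?_).compl
    exact ((hconv s hs.1).ordConnected).measurableSet
  -- the union is uncountable
  have huA : ¬ Countable (⋃₀ A : Set ℝ) := by
    rw [Set.countable_coe_iff]
    intro h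
    apply huncount
    have hsub : A ⊆ (fun a : ℝ => ({a} : Set ℝ)) '' (⋃₀ A) := by
      rintro s ⟨hsP, a, rfl⟩
      exact ⟨a, ⟨{a}, ⟨hsP, a, rfl⟩, rfl⟩, rfl⟩
    exact (h.image _).mono hsub
  haveI : StandardBorelSpace (⋃₀ A : Set ℝ) := hmeas.standardBorel
  have e := PolishSpace.measurableEquivNatBoolOfNotCountable (α := (⋃₀ A : Set ℝ)) huA
  rw [Cardinal.mk_congr e.toEquiv]
  rw [Cardinal.mk_arrow, Cardinal.mk_bool, Cardinal.mk_nat, Cardinal.lift_uzero,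
    Cardinal.lift_uzero, Cardinal.continuum]
end

section
/- The union of the singleton members of a partition of ℝ into intervals is a Gδ subset of ℝ. -/
/-- A convex subset of ℝ which is not a singleton has nonempty interior. -/
lemma aux_int {s : Set ℝ} (hc : Convex ℝ s) (hne : s.Nonempty)
    (hns : ¬ ∃ a : ℝ, s = {a}) : (interior s).Nonempty := by
  obtain ⟨a, ha⟩ := hne
  have : ∃ b ∈ s, b ≠ a := by
    by_contra h
    push_neg at h
    exact hns ⟨a, Set.eq_singleton_iff_unique_mem.2 ⟨ha, h⟩⟩
  obtain ⟨b, hb, hba⟩ := this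
  rcases hba.lt_or_gt with h | h
  · have : Set.Ioo b a ⊆ s := fun x hx =>
      hc.ordConnected.out hb ha ⟨hx.1.le, hx.2.le⟩
    exact ⟨(b + a) / 2, interior_maximal this isOpen_Ioo (by constructor <;> linarith)⟩
  · have : Set.Ioo a b ⊆ s := fun x hx =>
      hc.ordConnected.out ha hb ⟨hx.1.le, hx.2.le⟩
    exact ⟨(a + b) / 2, interior_maximal this isOpen_Ioo (by constructor <;> linarith)⟩

/-- For convex `s ⊆ ℝ`, the set of non-interior points of `s` is countable. -/
lemma aux_cnt {s : Set ℝ} (hc : Convex ℝ s) : (s \ interior s).Countable := by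
  set t := s \ interior s with ht
  have key : ∀ x ∈ t, (∀ y ∈ t, x ≤ y) ∨ (∀ y ∈ t, y ≤ x) := by
    intro x hx
    by_contra h
    push_neg at h
    obtain ⟨⟨a, ha, hax⟩, b, hb, hxb⟩ := h
    have hsub : Set.Ioo a b ⊆ s := fun z hz =>
      hc.ordConnected.out ha.1 hb.1 ⟨hz.1.le, hz.2.le⟩
    exact hx.2 (interior_maximal hsub isOpen_Ioo ⟨hax, hxb⟩)
  have : t ⊆ {x ∈ t | ∀ y ∈ t, x ≤ y} ∪ {x ∈ t | ∀ y ∈ t, y ≤ x} := by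
    intro x hx
    rcases key x hx with h | h
    · exact Or.inl ⟨hx, h⟩
    · exact Or.inr ⟨hx, h⟩
  refine Set.Countable.mono this (Set.Countable.union ?_ ?_) <;>
    refine Set.Subsingleton.countable ?_
  · rintro x ⟨hx, hx'⟩ y ⟨hy, hy'⟩
    exact le_antisymm (hx' y hy) (hy' x hx)
  · rintro x ⟨hx, hx'⟩ y ⟨hy, hy'⟩
    exact le_antisymm (hy' x hx) (hx' y hy)

lemma aux_gdelta_compl {s : Set ℝ} (hc : Convex ℝ s) : IsGδ sᶜ := by
  have : sᶜ = (interior s)ᶜ ∩ (s \ interior s)ᶜ := by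
    ext x
    simp only [Set.mem_compl_iff, Set.mem_inter_iff, Set.mem_diff]
    constructor
    · intro h; exact ⟨fun h' => h (interior_subset h'), fun h' => h h'.1⟩
    · rintro ⟨h1, h2⟩ hx; exact h2 ⟨hx, fun h' => h1 h'⟩
  rw [this]
  exact (isOpen_interior.isClosed_compl.isGδ).inter (aux_cnt hc).isGδ_compl

theorem stmt_14 (P : Set (Set ℝ))
    (hconv : ∀ s ∈ P, Convex ℝ s) (hne : ∀ s ∈ P, s.Nonempty)
    (hdisj : ∀ s ∈ P, ∀ t ∈ P, s ≠ t → Disjoint s t)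
    (hcover : ⋃₀ P = Set.univ) :
    IsGδ (⋃₀ {s ∈ P | ∃ a : ℝ, s = {a}} : Set ℝ) := by
  set N : Set (Set ℝ) := {s ∈ P | ¬ ∃ a : ℝ, s = {a}} with hN
  have hNcnt : N.Countable := by
    refine Set.PairwiseDisjoint.countable_of_nonempty_interior (s := id)
      (fun s hs t ht hst => hdisj s hs.1 t ht.1 hst)
      (fun s hs => aux_int (hconv s hs.1) (hne s hs.1) hs.2)
  have heq : (⋃₀ {s ∈ P | ∃ a : ℝ, s = {a}} : Set ℝ) = (⋃₀ N)ᶜ := by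
    ext x
    simp only [Set.mem_sUnion, Set.mem_compl_iff, Set.mem_setOf_eq, hN]
    constructor
    · rintro ⟨s, ⟨hsP, hssing⟩, hxs⟩ ⟨t, ⟨htP, htns⟩, hxt⟩
      have hst : s ≠ t := fun h => htns (h ▸ hssing)
      exact Set.disjoint_iff.1 (hdisj s hsP t htP hst) ⟨hxs, hxt⟩ 
    · intro h
      have : x ∈ ⋃₀ P := hcover ▸ Set.mem_univ x
      obtain ⟨s, hsP, hxs⟩ := this
      refine ⟨s, ⟨hsP, ?_⟩, hxs⟩
      by_contra hns
      exact h ⟨s, ⟨hsP, hns⟩, hxs⟩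
  rw [heq, Set.sUnion_eq_biUnion, Set.compl_iUnion₂]
  exact IsGδ.biInter hNcnt fun s hs => aux_gdelta_compl (hconv s hs.1)
end

section
/- If (Kₙ)ₙ∈ℕ is a sequence of mutually disjoint nonempty compact intervals in ℝ (possibly singletons), then ℝ \ ⋃ₙ Kₙ is nonempty and cannot be written as a union of finitely many intervals. -/
/-!
Call `[c, d]` straddling if `c` and `d` lie in different pieces. If a straddling interval were
covered by the pieces, one could shrink it to a straddling subinterval avoiding `K j`, for
`j = 0, 1, 2, …` in turn; a point common to these nested compact intervals lies in no piece.
So between points of different pieces there is always a point of the complement. Sorting one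
point from each of `k + 2` pieces, the gaps between consecutive ones give `k + 1` points of the
complement, any two separated by a point of a piece; by pigeonhole no `k` intervals contained in
the complement can cover them.
-/

open Set Function OrderDual

theorem not_subset_iUnion_of_forall_exists_disjoint {X : Type*} [TopologicalSpace X] [T2Space X]
    {K : ℕ → Set X} (P : Set X → Prop) (hP : ∀ s, P s → s.Nonempty ∧ IsCompact s)
    (hstep : ∀ j s, P s → s ⊆ ⋃ n, K n → ∃ t ⊆ s, P t ∧ Disjoint t (K j))
    {s : Set X} (hs : P s) : ¬ s ⊆ ⋃ n, K n := by
  intro hcov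
  choose! f hfs hfP hfK using hstep
  let t : ℕ → Set X := fun n => Nat.rec s (fun j u => f j u) n
  have ht : ∀ n, P (t n) ∧ t n ⊆ ⋃ n, K n := by
    intro n
    induction n with
    | zero => exact ⟨hs, hcov⟩
    | succ j ih => exact ⟨hfP j _ ih.1 ih.2, (hfs j _ ih.1 ih.2).trans ih.2⟩
  obtain ⟨x, hx⟩ := (hP _ (ht 0).1).2.nonempty_iInter_of_sequence_nonempty_isCompact_isClosed t
    (fun j => hfs j _ (ht j).1 (ht j).2) (fun j => (hP _ (ht j).1).1)
    (fun j => (hP _ (ht j).1).2.isClosed)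
  obtain ⟨j, hj⟩ := mem_iUnion.1 (hcov (mem_iInter.1 hx 0))
  exact disjoint_left.1 (hfK j _ (ht j).1 (ht j).2) (mem_iInter.1 hx (j + 1)) hj

section LinearOrder

variable {α : Type*} [LinearOrder α] {K : ℕ → Set α}

def Straddles (K : ℕ → Set α) (c d : α) : Prop :=
  c ≤ d ∧ ∃ p q, p ≠ q ∧ c ∈ K p ∧ d ∈ K q

theorem exists_straddles_disjoint_of_mem_left [DenselyOrdered α]
    (hK : ∀ n, ∃ a b, K n = Icc a b) (hdisj : Pairwise (Disjoint on K)) {c d : α} {p j : ℕ}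
    (hcd : c ≤ d) (hc : c ∈ K p) (hd : d ∉ K p) (hcov : Icc c d ⊆ ⋃ n, K n) (hjp : j ≠ p) :
    ∃ c' d', Straddles K c' d' ∧ Icc c' d' ⊆ Icc c d ∧ Disjoint (Icc c' d') (K j) := by
  obtain ⟨γ, δ, hKp⟩ := hK p
  rw [hKp] at hc hd
  have hδ : δ ∈ K p := hKp ▸ ⟨hc.1.trans hc.2, le_rfl⟩
  have hδd : δ < d := lt_of_not_ge fun h => hd ⟨hc.1.trans hcd, h⟩
  by_cases hKj : Disjoint (Icc δ d) (K j)
  · obtain ⟨q, hq⟩ := mem_iUnion.1 (hcov (right_mem_Icc.2 hcd))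
    exact ⟨δ, d, ⟨hδd.le, p, q, fun h => hd (hKp ▸ h ▸ hq), hδ, hq⟩,
      Icc_subset_Icc hc.2 le_rfl, hKj⟩
  -- `K j` lies strictly right of `δ`, and a point strictly between lies in a third piece.
  obtain ⟨y, hy, hyj⟩ := not_disjoint_iff.1 hKj
  obtain ⟨a, b, hKj⟩ := hK j
  rw [hKj] at hyj ⊢
  have hδa : δ < a := lt_of_not_ge fun h =>
    disjoint_left.1 (hdisj hjp) (hKj ▸ ⟨h, hy.1.trans hyj.2⟩ : δ ∈ K j) hδ
  obtain ⟨z, hδz, hza⟩ := exists_between hδa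
  have hzd : z ≤ d := hza.le.trans (hyj.1.trans hy.2)
  obtain ⟨r, hr⟩ := mem_iUnion.1 (hcov ⟨hc.2.trans hδz.le, hzd⟩)
  refine ⟨δ, z, ⟨hδz.le, p, r, ?_, hδ, hr⟩, Icc_subset_Icc hc.2 hzd, ?_⟩
  · rintro rfl
    exact (hKp ▸ hr : z ∈ Icc γ δ).2.not_gt hδz
  · exact disjoint_left.2 fun x hx hxj => (hx.2.trans_lt hza).not_ge hxj.1

theorem Straddles.exists_straddles_disjoint [DenselyOrdered α]
    (hK : ∀ n, ∃ a b, K n = Icc a b) (hdisj : Pairwise (Disjoint on K)) {c d : α}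
    (h : Straddles K c d) (hcov : Icc c d ⊆ ⋃ n, K n) (j : ℕ) :
    ∃ c' d', Straddles K c' d' ∧ Icc c' d' ⊆ Icc c d ∧ Disjoint (Icc c' d') (K j) := by
  obtain ⟨hcd, p, q, hpq, hc, hd⟩ := h
  by_cases hjp : j = p
  -- then `j ≠ q`: the case above in the reversed order
  · have hKdual : ∀ n, ∃ a b : αᵒᵈ, K n = Icc a b := fun n => by
      obtain ⟨a, b, h⟩ := hK n
      exact ⟨toDual b, toDual a, by rw [Icc_toDual]; exact h⟩
    obtain ⟨c', d', ⟨hcd', p', q', hpq', hc', hd'⟩, hsub, hdisj'⟩ :=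
      exists_straddles_disjoint_of_mem_left (α := αᵒᵈ) hKdual hdisj (c := toDual d)
        (d := toDual c) hcd hd (fun h => disjoint_left.1 (hdisj hpq) hc h)
        (by rw [Icc_toDual]; exact hcov) (fun h => hpq (hjp.symm.trans h))
    rw [Icc_toDual] at hsub
    exact ⟨ofDual d', ofDual c', ⟨hcd', q', p', hpq'.symm, hd', hc'⟩,
      by rw [Icc_ofDual]; exact hsub, by rw [Icc_ofDual]; exact hdisj'⟩
  · exact exists_straddles_disjoint_of_mem_left hK hdisj hcd hc
      (fun h => disjoint_left.1 (hdisj hpq) h hd) hcov hjp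

end LinearOrder

section ConditionallyCompleteLinearOrder

variable {α : Type*} [ConditionallyCompleteLinearOrder α] [TopologicalSpace α] [OrderTopology α]
  [DenselyOrdered α] {K : ℕ → Set α}

theorem Straddles.not_Icc_subset_iUnion (hK : ∀ n, ∃ a b, K n = Icc a b)
    (hdisj : Pairwise (Disjoint on K)) {c d : α} (h : Straddles K c d) :
    ¬ Icc c d ⊆ ⋃ n, K n :=
  not_subset_iUnion_of_forall_exists_disjoint (fun s => ∃ c d, Straddles K c d ∧ s = Icc c d)
    (by rintro _ ⟨c, d, h, rfl⟩; exact ⟨nonempty_Icc.2 h.1, isCompact_Icc⟩)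
    (by
      rintro j _ ⟨c, d, h, rfl⟩ hcov
      obtain ⟨c', d', h', hsub, hj⟩ := h.exists_straddles_disjoint hK hdisj hcov j
      exact ⟨_, hsub, ⟨c', d', h', rfl⟩, hj⟩)
    ⟨c, d, h, rfl⟩

theorem exists_pairwise_not_uIcc_subset_compl_iUnion
    (hK : ∀ n, ∃ a b, a ≤ b ∧ K n = Icc a b) (hdisj : Pairwise (Disjoint on K)) (n : ℕ) :
    ∃ u : Fin n → α, (∀ i, u i ∈ (⋃ m, K m)ᶜ) ∧
      Pairwise fun i j => ¬ uIcc (u i) (u j) ⊆ (⋃ m, K m)ᶜ := by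
  choose a b hab hKab using hK
  have ha : ∀ m, a m ∈ K m := fun m => hKab m ▸ left_mem_Icc.2 (hab m)
  have hinj : Injective a := fun m m' h => by
    by_contra hne
    exact disjoint_left.1 (hdisj hne) (ha m) (h ▸ ha m')
  have : Infinite (range a) := (infinite_range_of_injective hinj).to_subtype
  obtain ⟨e⟩ := nonempty_orderEmbedding_of_finite_infinite (Fin (n + 1)) (range a)
  choose idx hidx using fun i => (e i).2
  have ht : StrictMono fun i => a (idx i) := fun i j hij => by
    simpa only [hidx, Subtype.coe_lt_coe] using e.strictMono hij
  have hgap : ∀ i : Fin n, ∃ z ∈ Icc (a (idx i.castSucc)) (a (idx i.succ)), z ∉ ⋃ m, K m := by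
    intro i
    have hlt := ht (Fin.castSucc_lt_succ (i := i))
    exact not_subset.1 (Straddles.not_Icc_subset_iUnion (fun m => ⟨a m, b m, hKab m⟩) hdisj
      ⟨hlt.le, _, _, fun h => hlt.ne (congrArg a h), ha _, ha _⟩)
  choose u hu hucompl using hgap
  refine ⟨u, hucompl, fun i j hij => ?_⟩
  wlog hlt : i < j generalizing i j
  · rw [uIcc_comm]
    exact this j i hij.symm (hij.lt_or_gt.resolve_left hlt)
  have hsep : a (idx i.succ) ∈ uIcc (u i) (u j) :=
    Icc_subset_uIcc ⟨(hu i).2, (ht.monotone (Fin.succ_le_castSucc_iff.2 hlt)).trans (hu j).1⟩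
  exact fun hsub => hsub hsep (mem_iUnion.2 ⟨_, ha _⟩)

end ConditionallyCompleteLinearOrder

theorem card_le_of_iUnion_ordConnected_eq {α ι κ : Type*} [LinearOrder α] [Fintype ι]
    [Fintype κ] {S : Set α} {u : ι → α} (hu : ∀ i, u i ∈ S)
    (hsep : Pairwise fun i j => ¬ uIcc (u i) (u j) ⊆ S) {I : κ → Set α}
    (hI : ∀ f, (I f).OrdConnected) (hIS : ⋃ f, I f = S) :
    Fintype.card ι ≤ Fintype.card κ := by
  by_contra! hcard
  choose f hf using fun i => mem_iUnion.1 (hIS ▸ hu i)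
  obtain ⟨i, j, hij, hfij⟩ := Fintype.exists_ne_map_eq_of_card_lt f hcard
  exact hsep hij (((hI (f i)).uIcc_subset (hf i) (hfij ▸ hf j)).trans
    (hIS ▸ subset_iUnion I (f i)))

theorem stmt_15 (K : ℕ → Set ℝ)
    (hK : ∀ n, ∃ a b : ℝ, a ≤ b ∧ K n = Set.Icc a b)
    (hdisj : ∀ m n : ℕ, m ≠ n → Disjoint (K m) (K n)) :
    ((⋃ n, K n)ᶜ).Nonempty ∧
      ¬ ∃ (k : ℕ) (I : Fin k → Set ℝ), (∀ i, Convex ℝ (I i)) ∧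
        (⋃ i, I i) = (⋃ n, K n)ᶜ := by
  refine ⟨?_, ?_⟩
  · obtain ⟨u, hu, -⟩ := exists_pairwise_not_uIcc_subset_compl_iUnion hK hdisj 1
    exact ⟨u 0, hu 0⟩
  · rintro ⟨k, I, hconv, hI⟩
    obtain ⟨u, hu, hsep⟩ := exists_pairwise_not_uIcc_subset_compl_iUnion hK hdisj (k + 1)
    have := card_le_of_iUnion_ordConnected_eq hu hsep (fun f => (hconv f).ordConnected) hI
    simp at this
end

section
/- A nondegenerate compact interval [a,b] with a < b cannot be partitioned into half-open intervals. -/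
/-- A left-closed right-open interval is never equal to a left-open right-closed one
(when nonempty). -/
lemma ico_ne_ioc_aux {u v u' w' : ℝ} (h : u < v) :
    Set.Ico u v ≠ Set.Ioc u' w' := by
  intro heq
  have hu : u ∈ Set.Ioc u' w' := by rw [← heq]; exact ⟨le_refl u, h⟩
  have hz : (u' + u) / 2 ∈ Set.Ioc u' w' :=
    ⟨by linarith [hu.1], by linarith [hu.1, hu.2]⟩
  rw [← heq] at hz
  linarith [hz.1, hu.1]

theorem stmt_16 (a b : ℝ) (hab : a < b) :
    ¬ ∃ P : Set (Set ℝ),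
      (∀ s ∈ P, s.Nonempty) ∧
      (∀ s ∈ P, ∀ t ∈ P, s ≠ t → Disjoint s t) ∧
      ⋃₀ P = Set.Icc a b ∧
      (∀ s ∈ P, ∃ u v : ℝ, u < v ∧ (s = Set.Ico u v ∨ s = Set.Ioc u v)) := by
  rintro ⟨P, -, hdisj, hcover, hform⟩
  have hmem : ∀ x ∈ Set.Icc a b, ∃ K ∈ P, x ∈ K := by
    intro x hx; rw [← hcover] at hx; exact hx
  have hsub : ∀ K ∈ P, K ⊆ Set.Icc a b := by
    intro K hK x hx; rw [← hcover]; exact ⟨K, hK, hx⟩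
  -- S : points x such that [a, x) is covered by Ico-type members of P
  set S : Set ℝ :=
    {x | x ≤ b ∧ ∀ t, a ≤ t → t < x →
      ∃ u v : ℝ, Set.Ico u v ∈ P ∧ t ∈ Set.Ico u v} with hSdef
  -- the interval containing a is of Ico type [u₀, v₀) with u₀ ≤ a < v₀
  obtain ⟨K₀, hK₀P, haK₀⟩ := hmem a ⟨le_refl a, le_of_lt hab⟩
  obtain ⟨u₀, v₀, hu₀v₀, hK₀⟩ := hform K₀ hK₀P
  have hK₀ico : K₀ = Set.Ico u₀ v₀ ∧ u₀ ≤ a ∧ a < v₀ := by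
    rcases hK₀ with h | h
    · rw [h] at haK₀; exact ⟨h, haK₀.1, haK₀.2⟩
    · exfalso
      rw [h] at haK₀
      have ht : (u₀ + a) / 2 ∈ K₀ := by
        rw [h]; exact ⟨by linarith [haK₀.1], by linarith [haK₀.1, haK₀.2]⟩
      have := (hsub K₀ hK₀P ht).1
      linarith [haK₀.1]
  obtain ⟨hK₀e, hu₀a, hav₀⟩ := hK₀ico
  have hv₀b : v₀ ≤ b := by
    by_contra hlt
    push_neg at hlt
    have ht : (b + v₀) / 2 ∈ K₀ := by
      rw [hK₀e]; exact ⟨by linarith, by linarith⟩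
    have := (hsub K₀ hK₀P ht).2
    linarith
  have hv₀S : v₀ ∈ S := by
    refine ⟨hv₀b, fun t hat htv => ⟨u₀, v₀, ?_, ⟨by linarith, htv⟩⟩⟩
    rw [← hK₀e]; exact hK₀P
  have hSbdd : BddAbove S := ⟨b, fun x hx => hx.1⟩
  have hSne : S.Nonempty := ⟨v₀, hv₀S⟩
  set s := sSup S with hsdef
  have hv₀s : v₀ ≤ s := le_csSup hSbdd hv₀S
  have hsb : s ≤ b := csSup_le hSne fun x hx => hx.1
  have has : a < s := lt_of_lt_of_le hav₀ hv₀s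
  -- everything in [a, s) is covered by Ico-type members
  have hAs : ∀ t, a ≤ t → t < s →
      ∃ u v : ℝ, Set.Ico u v ∈ P ∧ t ∈ Set.Ico u v := by
    intro t hat hts
    obtain ⟨x, hxS, htx⟩ := exists_lt_of_lt_csSup hSne hts
    exact hxS.2 t hat htx
  -- the interval K containing s
  obtain ⟨K, hKP, hsK⟩ := hmem s ⟨le_of_lt has, hsb⟩
  obtain ⟨u, w, huw, hK⟩ := hform K hKP
  rcases hK with hKe | hKe
  · -- K = Ico u w : then w ∈ S, contradicting s = sSup S < w
    rw [hKe] at hsK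
    obtain ⟨hus, hsw⟩ := hsK
    have hwb : w ≤ b := by
      by_contra hlt
      push_neg at hlt
      have ht : (b + w) / 2 ∈ K := by
        rw [hKe]; exact ⟨by linarith, by linarith⟩
      have := (hsub K hKP ht).2
      linarith
    have hwS : w ∈ S := by
      refine ⟨hwb, fun t hat htw => ?_⟩
      rcases lt_or_ge t s with h | h
      · exact hAs t hat h
      · exact ⟨u, w, by rw [← hKe]; exact hKP, ⟨le_trans hus h, htw⟩⟩
    have : w ≤ s := le_csSup hSbdd hwS
    linarith
  · -- K = Ioc u w : points just below s are in both K and an Ico-type member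
    rw [hKe] at hsK
    obtain ⟨hus, hsw⟩ := hsK
    have hua : a ≤ u := by
      by_contra hlt
      push_neg at hlt
      have ht : (u + a) / 2 ∈ K := by
        rw [hKe]
        exact ⟨by linarith, by linarith⟩
      have := (hsub K hKP ht).1
      linarith
    set t := (u + s) / 2 with htdef
    have hat : a ≤ t := by simp only [htdef]; linarith
    have hts : t < s := by simp only [htdef]; linarith
    have hut : u < t := by simp only [htdef]; linarith
    obtain ⟨u', v', hJP, htJ⟩ := hAs t hat hts
    have hne : Set.Ico u' v' ≠ K := by
      rw [hKe]
      exact ico_ne_ioc_aux (lt_of_le_of_lt htJ.1 htJ.2)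
    have hdis := hdisj _ hJP K hKP hne
    have htK : t ∈ K := by rw [hKe]; exact ⟨hut, by linarith⟩
    exact Set.disjoint_left.mp hdis htJ htK
end

section
/- Let Y be an uncountable set of irrationals such that {1} ∪ Y is a ℚ-linearly independent set of reals spanning ℝ, with a fixed countably infinite subset Y₀ ⊆ Y, and let 𝒰 be an ultrafilter on Y all of whose members have cardinality continuum; for A ⊆ Y let L(A) be the ℚ-linear span of {1} ∪ A. Then for every x ∈ ℝ there exists A ∈ 𝒰 with x ∈ L(A) and such that for all u < v the set [u,v] \ L(A) is infinite. -/
lemma aux_interval (V : Submodule ℚ ℝ) (h1 : (1:ℝ) ∈ V) (t : ℝ) (ht : t ∉ V) :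
    ∀ u v : ℝ, u < v → (Set.Icc u v \ (V : Set ℝ)).Infinite := by
  intro u v huv
  have htne : t ≠ 0 := by rintro rfl; exact ht (Submodule.zero_mem V)
  have htabs : 0 < |t| := abs_pos.mpr htne
  obtain ⟨q, hq1, hq2⟩ := exists_rat_btwn huv
  set δ : ℝ := min ((q:ℝ) - u) (v - q) with hδ
  have hδpos : 0 < δ := lt_min (by linarith) (by linarith)
  obtain ⟨r, hr0, hr1⟩ := exists_rat_btwn (show (0:ℝ) < δ / |t| from div_pos hδpos htabs)
  have hrne : (r:ℝ) ≠ 0 := ne_of_gt hr0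
  have hrQ : r ≠ 0 := by exact_mod_cast hrne
  set f : ℕ → ℝ := fun n => (q:ℝ) + t * ((r:ℝ) / (n+1)) with hf
  have hinj : Function.Injective f := by
    intro m n hmn
    have h1 : t * ((r:ℝ) / (m+1)) = t * ((r:ℝ) / (n+1)) := by
      simpa [hf] using hmn
    have h2 : (r:ℝ) / (m+1) = (r:ℝ) / (n+1) := mul_left_cancel₀ htne h1
    have hm : ((m:ℝ)+1) ≠ 0 := by positivity
    have hn : ((n:ℝ)+1) ≠ 0 := by positivity
    field_simp at h2
    have h3 := add_right_cancel h2
    exact_mod_cast h3.symm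
  have hqV : ((q:ℝ)) ∈ V := by
    have := V.smul_mem q h1
    simpa using this
  have hmem : ∀ n : ℕ, f n ∈ Set.Icc u v \ (V : Set ℝ) := by
    intro n
    have hn1 : (0:ℝ) < (n:ℝ) + 1 := by positivity
    have hle : (r:ℝ) / (n+1) ≤ (r:ℝ) := by
      rw [div_le_iff₀ hn1]
      nlinarith [hr0.le]
    have hpos : (0:ℝ) < (r:ℝ)/(n+1) := by positivity
    have habs : |t * ((r:ℝ)/(n+1))| < δ := by
      rw [abs_mul, abs_of_pos hpos]
      calc |t| * ((r:ℝ)/(n+1)) ≤ |t| * (r:ℝ) := by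
            exact mul_le_mul_of_nonneg_left hle htabs.le
        _ < |t| * (δ/|t|) := by exact mul_lt_mul_of_pos_left hr1 htabs
        _ = δ := by field_simp
    have habs' := abs_lt.mp habs
    constructor
    · constructor
      · have : δ ≤ (q:ℝ) - u := min_le_left _ _
        simp only [hf]; linarith [habs'.1]
      · have : δ ≤ v - (q:ℝ) := min_le_right _ _
        simp only [hf]; linarith [habs'.2]
    · intro hfV
      have hfV' : f n ∈ V := hfV
      have h4 : t * ((r:ℝ)/(n+1)) ∈ V := by
        have := V.sub_mem hfV' hqV
        simpa [hf] using this
      have h5 : t ∈ V := by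
        have := V.smul_mem (((n:ℚ)+1)/r) h4
        have heq : (((n:ℚ)+1)/r : ℚ) • (t * ((r:ℝ)/(n+1))) = t := by
          push_cast [Rat.smul_def]
          field_simp
        rwa [heq] at this
      exact ht h5
  exact Set.infinite_of_injective_forall_mem hinj hmem

theorem stmt_18 (Y : Set ℝ) (hirr : ∀ y ∈ Y, Irrational y)
    (hind : LinearIndependent ℚ (fun x : ↥({1} ∪ Y : Set ℝ) => (x : ℝ)))
    (hspan : Submodule.span ℚ ({1} ∪ Y : Set ℝ) = ⊤)
    (𝒰 : Ultrafilter ↥Y)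
    (h𝒰 : ∀ A ∈ 𝒰, Cardinal.mk A = Cardinal.continuum) :
    ∀ x : ℝ, ∃ A ∈ 𝒰,
      x ∈ Submodule.span ℚ ({1} ∪ (Subtype.val '' A) : Set ℝ) ∧
      ∀ u v : ℝ, u < v →
        (Set.Icc u v \ (Submodule.span ℚ ({1} ∪ (Subtype.val '' A) : Set ℝ) : Set ℝ)).Infinite := by
  intro x
  -- Y is infinite (cardinality continuum)
  have hYcont : Cardinal.mk ↥Y = Cardinal.continuum := by
    have := h𝒰 Set.univ (Filter.univ_mem)
    simpa using this
  have hYinf : Infinite ↥Y := by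
    rw [Cardinal.infinite_iff, hYcont]
    exact Cardinal.aleph0_le_continuum
  -- a countably infinite subset C of Y
  set e := Infinite.natEmbedding ↥Y with he
  set C : Set ↥Y := Set.range e with hC
  have hCinf : C.Infinite := Set.infinite_range_of_injective e.injective
  have hCcard : Cardinal.mk ↥C = Cardinal.aleph0 := by
    rw [hC, Cardinal.mk_range_eq _ e.injective, Cardinal.mk_nat]
  have hCnot : C ∉ 𝒰 := by
    intro hCmem
    have := h𝒰 C hCmem
    rw [hCcard] at this
    exact Cardinal.aleph0_lt_continuum.ne this
  have hCc : Cᶜ ∈ 𝒰 := (Ultrafilter.compl_mem_iff_notMem).mpr hCnot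
  -- finite support of x
  have hx : x ∈ Submodule.span ℚ ({1} ∪ Y : Set ℝ) := by rw [hspan]; trivial
  obtain ⟨tF, htFsub, htFmem⟩ := Submodule.mem_span_finite_of_mem_span hx
  set F : Set ↥Y := {y : ↥Y | (y:ℝ) ∈ (tF : Set ℝ)} with hF
  have hFfin : F.Finite := Set.Finite.preimage (Subtype.coe_injective.injOn) tF.finite_toSet
  set A : Set ↥Y := Cᶜ ∪ F with hA
  have hAmem : A ∈ 𝒰 := 𝒰.mem_of_superset hCc Set.subset_union_left
  refine ⟨A, hAmem, ?_, ?_⟩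
  · -- x in span
    apply Submodule.span_mono (s := (tF : Set ℝ)) ?_ htFmem
    intro z hz
    rcases htFsub hz with hz1 | hzY
    · exact Or.inl hz1
    · refine Or.inr ⟨⟨z, hzY⟩, Or.inr hz, rfl⟩
  · -- interval part
    intro u v huv
    set V := Submodule.span ℚ ({1} ∪ (Subtype.val '' A) : Set ℝ) with hV
    have h1V : (1:ℝ) ∈ V := Submodule.subset_span (Or.inl rfl)
    -- find y in C \ F, hence y ∉ A
    obtain ⟨y, hyC, hyF⟩ := (hCinf.diff hFfin).nonempty
    have hyA : y ∉ A := by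
      rintro (h | h)
      · exact h hyC
      · exact hyF h
    -- y (as a real) is not in {1} ∪ val '' A
    have hynotin : (y:ℝ) ∉ ({1} ∪ (Subtype.val '' A) : Set ℝ) := by
      rintro (h | ⟨z, hzA, hzy⟩)
      · exact (hirr _ y.2).ne_one h
      · exact hyA (by rwa [Subtype.coe_injective hzy] at hzA)
    -- y not in V, by linear independence
    have hsub : ({1} ∪ (Subtype.val '' A) : Set ℝ) ⊆ ({1} ∪ Y : Set ℝ) := by
      rintro z (h | ⟨w, _, rfl⟩)
      · exact Or.inl h
      · exact Or.inr w.2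
    have hyV : (y:ℝ) ∉ V := by
      set T : Set ℝ := ({1} ∪ Y : Set ℝ) with hT
      set s : Set ℝ := ({1} ∪ (Subtype.val '' A) : Set ℝ) with hs
      set i : ↥T := ⟨(y:ℝ), Or.inr y.2⟩ with hi
      set S' : Set ↥T := Subtype.val ⁻¹' s with hS'
      have hiS : i ∉ S' := hynotin
      have himg : (fun x : ↥T => (x:ℝ)) '' S' = s := by
        rw [hS']
        have := Subtype.image_preimage_coe T s
        simpa [Set.inter_eq_self_of_subset_right hsub] using this
      have := hind.notMem_span_image (s := S') hiS
      rw [himg] at this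
      exact this
    exact aux_interval V h1V _ hyV u v huv
end

section
/- Let Y be a set of irrational numbers such that {1} ∪ Y is a basis of ℝ as a ℚ-vector space, and let A ⊆ Y with |A| = 2^ℵ₀. Then the ℚ-linear span L(A) of {1} ∪ A is c-dense in ℝ: for all u < v, |L(A) ∩ [u,v]| = 2^ℵ₀. -/
theorem stmt_19 (Y : Set ℝ) (hirr : ∀ y ∈ Y, Irrational y)
    (hind : LinearIndependent ℚ (fun x : ↥({1} ∪ Y : Set ℝ) => (x : ℝ)))
    (hspan : Submodule.span ℚ ({1} ∪ Y : Set ℝ) = ⊤)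
    (A : Set ℝ) (hA : A ⊆ Y) (hcard : Cardinal.mk A = Cardinal.continuum) :
    ∀ u v : ℝ, u < v →
      Cardinal.mk (((Submodule.span ℚ ({1} ∪ A : Set ℝ) : Set ℝ) ∩ Set.Icc u v : Set ℝ)) =
        Cardinal.continuum := by
  intro u v huv
  apply le_antisymm
  · exact (Cardinal.mk_set_le _).trans_eq Cardinal.mk_real
  · rw [← hcard]
    have key : ∀ a : A, ∃ q : ℚ,
        (a : ℝ) + q ∈ (Submodule.span ℚ ({1} ∪ A : Set ℝ) : Set ℝ) ∩ Set.Icc u v := by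
      intro a
      obtain ⟨q, hq1, hq2⟩ := exists_rat_btwn (show u - (a : ℝ) < v - a by linarith)
      refine ⟨q, ?_, by linarith, by linarith⟩
      have ha : (a : ℝ) ∈ Submodule.span ℚ ({1} ∪ A : Set ℝ) :=
        Submodule.subset_span (Or.inr a.2)
      have h1 : (1 : ℝ) ∈ Submodule.span ℚ ({1} ∪ A : Set ℝ) :=
        Submodule.subset_span (Or.inl rfl)
      have := Submodule.add_mem _ ha (Submodule.smul_mem _ q h1)
      simpa using this
    choose q hq using key
    have hinj : Function.Injective (fun a : A =>
        (⟨(a : ℝ) + q a, hq a⟩ :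
          ↥((Submodule.span ℚ ({1} ∪ A : Set ℝ) : Set ℝ) ∩ Set.Icc u v))) := by
      intro a b hab
      simp only [Subtype.mk.injEq] at hab
      by_contra hne
      have hne' : (a : ℝ) ≠ (b : ℝ) := fun h => hne (Subtype.ext h)
      have haY : (a : ℝ) ∈ ({1} ∪ Y : Set ℝ) := Or.inr (hA a.2)
      have hbY : (b : ℝ) ∈ ({1} ∪ Y : Set ℝ) := Or.inr (hA b.2)
      have h1Y : (1 : ℝ) ∈ ({1} ∪ Y : Set ℝ) := Or.inl rfl
      have ha1 : (a : ℝ) ≠ 1 := by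
        intro h
        exact (hirr _ (hA a.2)) ⟨1, by simp [h]⟩
      have hb1 : (b : ℝ) ≠ 1 := by
        intro h
        exact (hirr _ (hA b.2)) ⟨1, by simp [h]⟩
      set g : Fin 3 → ↥({1} ∪ Y : Set ℝ) := ![⟨1, h1Y⟩, ⟨(a : ℝ), haY⟩, ⟨(b : ℝ), hbY⟩] with hg
      have ginj : Function.Injective g := by
        intro i j hij
        fin_cases i <;> fin_cases j <;>
          simp_all [g, Subtype.ext_iff] <;>
          first
            | rfl
            | exact absurd hij.symm ha1
            | exact absurd hij ha1
            | exact absurd hij.symm hb1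
            | exact absurd hij hb1
            | exact absurd hij hne'
            | exact absurd hij.symm hne'
      have hli : LinearIndependent ℚ (fun i => ((g i : ℝ))) := hind.comp g ginj
      have := Fintype.linearIndependent_iff.mp hli ![q a - q b, 1, -1] ?_ 1
      · norm_num at this
      · have hsum : ((q a : ℝ) - q b) * 1 + 1 * (a : ℝ) + (-1) * (b : ℝ) = 0 := by
          push_cast
          linarith [hab]
        simp [Fin.sum_univ_three, g]
        push_cast
        linarith [hab]
    exact Cardinal.mk_le_of_injective hinj
end
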